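/- arXiv:2310.01012 — 6 statements merged into one kernel-verified Lean document; each statement's English description precedes it below -/
import Mathlib

section
/- Let M be a symmetric positive semidefinite D×D real matrix and W̃ any D×K real matrix. Then ‖M − W̃W̃ᵀ‖_F² ≥ ∑_{k=K+1}^{D} λ_k(M)², where λ_1 ≥ … ≥ λ_D are the eigenvalues of M. -/
open Matrix

/-- Squared Frobenius norm of a real matrix. -/
def frobSq {m n : Type*} [Fintype m] [Fintype n] (M : Matrix m n ℝ) : ℝ :=
  ∑ i, ∑ j, (M i j) ^ 2

/-!
Diagonalise `W * Wᵀ = U * diagonal μ * Uᵀ` with `U` orthogonal; at most `K` of the `μ i` are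
nonzero. Conjugating by `U` turns `M - W * Wᵀ` into `Qᵀ * diagonal eig * Q - diagonal μ` with
`Q = Vᵀ * U` orthogonal, and each of the at least `D - K` rows with `μ i = 0` contributes its full
squared norm `∑ d, eig d ^ 2 * Q d i ^ 2`. The weights `w d = ∑_{μ i = 0} Q d i ^ 2` lie in `[0, 1]`
and sum to at least `D - K`, so against `eig d ^ 2`, which decreases because `M` is positive
semidefinite, they give at least the sum of its last `D - K` terms.
-/

open Finset

theorem frobSq_eq_trace {m n : Type*} [Fintype m] [Fintype n] (A : Matrix m n ℝ) :
    frobSq A = trace (A * Aᵀ) := by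
  simp only [frobSq, trace, Matrix.diag, mul_apply, transpose_apply, sq]

theorem sum_apply_sq_of_mul_transpose_eq_one {m n : Type*} [Fintype n] [DecidableEq m]
    {Q : Matrix m n ℝ} (hQ : Q * Qᵀ = 1) (i : m) : ∑ j, Q i j ^ 2 = 1 := by
  simpa [mul_apply, sq] using congrFun (congrFun hQ i) i

section Square

variable {n : Type*} [Fintype n] [DecidableEq n]

theorem frobSq_transpose_mul_mul {U : Matrix n n ℝ} (hU : U * Uᵀ = 1) (A : Matrix n n ℝ) :
    frobSq (Uᵀ * A * U) = frobSq A := by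
  rw [frobSq_eq_trace, frobSq_eq_trace, transpose_mul, transpose_mul, transpose_transpose]
  simp only [Matrix.mul_assoc]
  rw [← Matrix.mul_assoc U Uᵀ, hU, Matrix.one_mul, trace_mul_comm, Matrix.mul_assoc,
    Matrix.mul_assoc, hU, Matrix.mul_one]

theorem sum_sum_sq_le_frobSq_sub_diagonal (A : Matrix n n ℝ) (μ : n → ℝ) :
    ∑ i with μ i = 0, ∑ j, A i j ^ 2 ≤ frobSq (A - diagonal μ) := by
  calc ∑ i with μ i = 0, ∑ j, A i j ^ 2
      = ∑ i with μ i = 0, ∑ j, (A - diagonal μ) i j ^ 2 := by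
        refine sum_congr rfl fun i hi => sum_congr rfl fun j _ => ?_
        rw [Matrix.sub_apply, diagonal_apply, (mem_filter.mp hi).2]
        simp
    _ ≤ frobSq (A - diagonal μ) :=
        sum_le_sum_of_subset_of_nonneg (filter_subset _ _) fun i _ _ =>
          sum_nonneg fun j _ => sq_nonneg _

theorem sum_apply_sq_transpose_mul_diagonal_mul {Q : Matrix n n ℝ} (hQ : Q * Qᵀ = 1)
    (g : n → ℝ) (i : n) :
    ∑ j, (Qᵀ * diagonal g * Q) i j ^ 2 = ∑ d, g d ^ 2 * Q d i ^ 2 := by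
  set X := Qᵀ * diagonal g * Q
  have hXX : X * Xᵀ = Qᵀ * diagonal (g ^ 2) * Q := by
    simp only [X, transpose_mul, transpose_transpose, diagonal_transpose, Matrix.mul_assoc]
    rw [← Matrix.mul_assoc Q, hQ, Matrix.one_mul, ← Matrix.mul_assoc (diagonal g),
      diagonal_mul_diagonal, sq]
    rfl
  calc ∑ j, X i j ^ 2 = (X * Xᵀ) i i := by simp only [mul_apply, transpose_apply, sq]
    _ = ∑ d, g d ^ 2 * Q d i ^ 2 := by
      rw [hXX, mul_apply]
      simp only [mul_diagonal, transpose_apply, Pi.pow_apply]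
      exact sum_congr rfl fun d _ => by ring

theorem Matrix.IsHermitian.exists_orthogonal_diagonal_eq {N : Matrix n n ℝ} (hN : N.IsHermitian) :
    ∃ (U : Matrix n n ℝ) (μ : n → ℝ), U * Uᵀ = 1 ∧ Uᵀ * U = 1 ∧
      N = U * diagonal μ * Uᵀ ∧ #{i | μ i ≠ 0} = N.rank := by
  have hU := hN.eigenvectorUnitary.2
  refine ⟨hN.eigenvectorUnitary, hN.eigenvalues, ?_, ?_, ?_, ?_⟩
  · simpa [star_eq_conjTranspose] using mem_unitaryGroup_iff.mp hU
  · simpa [star_eq_conjTranspose] using mem_unitaryGroup_iff'.mp hU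
  · simpa [Unitary.conjStarAlgAut_apply, star_eq_conjTranspose] using hN.spectral_theorem
  · rw [hN.rank_eq_card_non_zero_eigs, Fintype.card_subtype]

end Square

theorem Fin.card_filter_le_val (D K : ℕ) : #{d : Fin D | K ≤ (d : ℕ)} = D - K := by
  have h1 := Fin.card_filter_val_lt (n := D) (m := K)
  have h2 := card_filter_add_card_filter_not (s := (univ : Finset (Fin D)))
    (fun d : Fin D => (d : ℕ) < K)
  simp only [not_lt, card_univ, Fintype.card_fin] at h2
  omega

theorem sum_tail_le_sum_mul_of_antitone {D K : ℕ} {g w : Fin D → ℝ} (hg : Antitone g)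
    (hg0 : 0 ≤ g) (hw0 : 0 ≤ w) (hw1 : w ≤ 1) (hw : ((D - K : ℕ) : ℝ) ≤ ∑ d, w d) :
    (∑ d : Fin D, if K ≤ (d : ℕ) then g d else 0) ≤ ∑ d, g d * w d := by
  obtain ⟨t, ht0, hhead, htail⟩ : ∃ t, 0 ≤ t ∧ (∀ d : Fin D, (d : ℕ) < K → t ≤ g d) ∧
      ∀ d : Fin D, K ≤ (d : ℕ) → g d ≤ t := by
    by_cases hKD : K < D
    · exact ⟨g ⟨K, hKD⟩, hg0 _, fun d hd => hg (Fin.le_def.2 hd.le), fun d hd => hg hd⟩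
    · exact ⟨0, le_rfl, fun d _ => hg0 d, fun d hd => absurd d.isLt (by omega)⟩
  have hcard : ∑ d : Fin D, (if K ≤ (d : ℕ) then (1 : ℝ) else 0) = (D - K : ℕ) := by
    rw [sum_boole, Fin.card_filter_le_val]
  -- termwise, `(g d - t) * (w d - [K ≤ d]) ≥ 0`
  calc (∑ d : Fin D, if K ≤ (d : ℕ) then g d else 0)
      ≤ ∑ d, (g d * w d + t * ((if K ≤ (d : ℕ) then 1 else 0) - w d)) := by
        refine sum_le_sum fun d _ => ?_
        split_ifs with hd
        · have hwd : w d ≤ 1 := hw1 d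
          nlinarith [mul_nonneg (sub_nonneg.2 (htail d hd)) (sub_nonneg.2 hwd)]
        · nlinarith [mul_nonneg (sub_nonneg.2 (hhead d (not_le.1 hd))) (hw0 d)]
    _ = ∑ d, g d * w d + t * ((D - K : ℕ) - ∑ d, w d) := by
        rw [sum_add_distrib, ← mul_sum, sum_sub_distrib, hcard]
    _ ≤ ∑ d, g d * w d := by nlinarith

theorem sum_sq_tail_le_frobSq_sub {D K : ℕ} {V : Matrix (Fin D) (Fin D) ℝ} (hV : Vᵀ * V = 1)
    {eig : Fin D → ℝ} (heig : Antitone eig) (heig0 : 0 ≤ eig) {N : Matrix (Fin D) (Fin D) ℝ}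
    (hN : N.IsHermitian) (hrank : N.rank ≤ K) :
    (∑ k : Fin D, if K ≤ (k : ℕ) then eig k ^ 2 else 0) ≤
      frobSq (V * diagonal eig * Vᵀ - N) := by
  obtain ⟨U, μ, hU, hU', rfl, hμ⟩ := hN.exists_orthogonal_diagonal_eq
  set Q := Vᵀ * U
  have hQ : Q * Qᵀ = 1 := by
    rw [transpose_mul, transpose_transpose, Matrix.mul_assoc, ← Matrix.mul_assoc U, hU,
      Matrix.one_mul, hV]
  have hQ' : Qᵀ * Q = 1 := mul_eq_one_comm.mp hQ
  have hconj : Uᵀ * (V * diagonal eig * Vᵀ - U * diagonal μ * Uᵀ) * U =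
      Qᵀ * diagonal eig * Q - diagonal μ := by
    simp only [Q, transpose_mul, transpose_transpose, Matrix.mul_sub, Matrix.sub_mul,
      Matrix.mul_assoc]
    rw [← Matrix.mul_assoc Uᵀ U, hU', Matrix.one_mul, Matrix.mul_one]
  set w : Fin D → ℝ := fun d => ∑ i with μ i = 0, Q d i ^ 2
  have hw0 : 0 ≤ w := fun d => sum_nonneg fun i _ => sq_nonneg _
  have hw1 : w ≤ 1 := fun d =>
    (sum_le_sum_of_subset_of_nonneg (filter_subset _ _) fun i _ _ => sq_nonneg _).trans_eq
      (sum_apply_sq_of_mul_transpose_eq_one hQ d)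
  have hw : ∑ d, w d = #{i | μ i = 0} := by
    have hcol (i : Fin D) : ∑ d, Q d i ^ 2 = 1 :=
      sum_apply_sq_of_mul_transpose_eq_one (Q := Qᵀ) (by rwa [transpose_transpose]) i
    simp only [w]
    rw [sum_comm, sum_congr rfl fun i _ => hcol i, sum_const, nsmul_one]
  have hcard : D - K ≤ #{i | μ i = 0} := by
    have := card_filter_add_card_filter_not (s := univ) (fun i => μ i = 0)
    simp only [card_univ, Fintype.card_fin, ← ne_eq] at this
    omega
  calc (∑ k : Fin D, if K ≤ (k : ℕ) then eig k ^ 2 else 0)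
      ≤ ∑ d, eig d ^ 2 * w d :=
        sum_tail_le_sum_mul_of_antitone (g := fun d => eig d ^ 2)
          (fun a b hab => pow_le_pow_left₀ (heig0 b) (heig hab) 2) (fun d => sq_nonneg _)
          hw0 hw1 (hw ▸ by exact_mod_cast hcard)
    _ = ∑ i with μ i = 0, ∑ j, (Qᵀ * diagonal eig * Q) i j ^ 2 := by
        simp only [sum_apply_sq_transpose_mul_diagonal_mul hQ, w, mul_sum]
        exact sum_comm
    _ ≤ frobSq (Qᵀ * diagonal eig * Q - diagonal μ) := sum_sum_sq_le_frobSq_sub_diagonal _ _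
    _ = frobSq (V * diagonal eig * Vᵀ - U * diagonal μ * Uᵀ) := by
        rw [← hconj, frobSq_transpose_mul_mul hU]

theorem stmt_1 {D K : ℕ} (M : Matrix (Fin D) (Fin D) ℝ) (hM : M.PosSemidef)
    (V : Matrix (Fin D) (Fin D) ℝ) (hV : Vᵀ * V = 1)
    (eig : Fin D → ℝ) (heig : Antitone eig)
    (hdecomp : M = V * Matrix.diagonal eig * Vᵀ)
    (W : Matrix (Fin D) (Fin K) ℝ) :
    (∑ k : Fin D, if K ≤ (k : ℕ) then (eig k) ^ 2 else 0) ≤ frobSq (M - W * Wᵀ) := by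
  have heig0 : 0 ≤ eig := by
    have hdiag : Vᵀ * M * V = diagonal eig := by
      rw [hdecomp, Matrix.mul_assoc, Matrix.mul_assoc, hV, Matrix.mul_one,
        ← Matrix.mul_assoc, hV, Matrix.one_mul]
    have := hM.conjTranspose_mul_mul_same V
    rw [conjTranspose_eq_transpose_of_trivial, hdiag, posSemidef_diagonal_iff] at this
    exact this
  have hWW : (W * Wᵀ).IsHermitian := by
    simpa using isHermitian_mul_conjTranspose_self W
  rw [hdecomp]
  exact sum_sq_tail_le_frobSq_sub hV heig heig0 hWW
    ((rank_mul_le_left W Wᵀ).trans (rank_le_width W))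
end

section
/- Let A, B be symmetric D×D real matrices with B positive definite, and suppose the GEP (A,B) has at least K strictly positive generalized eigenvalues λ_1 ≥ … ≥ λ_K > 0. Then the maximum over Ũ ∈ ℝ^{D×K} of trace(2 ŨᵀAŨ − (ŨᵀBŨ)(ŨᵀBŨ)) equals ∑_{k=1}^{K} λ_k². -/
open Matrix

/-!
In a `B`-orthonormal eigenbasis `Ufull` the substitution `U = Ufull * W` turns the objective into
`2 tr(S Λ) - tr(S²)` with `Λ = diag λ` and `S = W Wᵀ`, a positive semidefinite matrix of rank at
most `K`. Let `P` be the orthogonal projection onto the column space of `W` and `N = diag λ⁺`.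
Then `tr(S Λ) ≤ tr(S N)`, and `0 ≤ ‖P N - S‖²` gives `2 tr(S N) - tr(S²) ≤ tr(P N²) = ∑ Pᵢᵢ λᵢ⁺²`.
The weights `Pᵢᵢ` lie in `[0, 1]` and sum to at most `K`, so this is at most the sum of the `K`
largest `λᵢ²`. Taking for `S` the diagonal matrix of the top `K` eigenvalues attains the bound.
-/

theorem Matrix.IsSymm.diag_mem_Icc_of_isIdempotentElem {n : Type*} [Fintype n]
    {P : Matrix n n ℝ} (hP : P.IsSymm) (hPP : IsIdempotentElem P) (i : n) :
    P i i ∈ Set.Icc 0 1 := by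
  have hsq : P i i = ∑ l, P i l ^ 2 := by
    conv_lhs => rw [← hPP.eq]
    simp only [mul_apply, hP.apply, sq]
  have hle : P i i ^ 2 ≤ P i i :=
    hsq ▸ Finset.single_le_sum (fun l _ => sq_nonneg (P i l)) (Finset.mem_univ i)
  constructor <;> nlinarith

theorem Matrix.IsSymm.trace_le_card_of_isIdempotentElem {n : Type*} [Fintype n]
    {P : Matrix n n ℝ} (hP : P.IsSymm) (hPP : IsIdempotentElem P) :
    P.trace ≤ Fintype.card n := by
  simpa [trace] using Finset.sum_le_sum fun i (_ : i ∈ Finset.univ) =>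
    (hP.diag_mem_Icc_of_isIdempotentElem hPP i).2

theorem Matrix.IsSymm.exists_generalizedInverse {n : Type*} [Fintype n] [DecidableEq n]
    {G : Matrix n n ℝ} (hG : G.IsSymm) :
    ∃ G' : Matrix n n ℝ, G'.IsSymm ∧ Commute G' G ∧ G * G' * G = G ∧ G' * G * G' = G' := by
  have hG : IsSelfAdjoint G := by
    rwa [IsSelfAdjoint, star_eq_conjTranspose, conjTranspose_eq_transpose_of_trivial]
  have hcont (f : ℝ → ℝ) : ContinuousOn f (spectrum ℝ G) := (finite_spectrum G).continuousOn f
  -- Since `0⁻¹ = 0`, the functional calculus of `x ↦ x⁻¹` is the Moore–Penrose inverse of `G`.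
  refine ⟨cfc (·⁻¹ : ℝ → ℝ) G, ?_, (Commute.refl G).cfc_real _, ?_, ?_⟩
  · have h := cfc_predicate (·⁻¹ : ℝ → ℝ) G
    rwa [IsSelfAdjoint, star_eq_conjTranspose, conjTranspose_eq_transpose_of_trivial] at h
  · have h := cfc_congr (a := G) (f := fun x : ℝ => x * x⁻¹ * x) (g := id)
      fun x _ => mul_inv_mul_cancel x
    rwa [cfc_mul _ _ _ (hcont _) (hcont _), cfc_mul _ _ _ (hcont _) (hcont _), cfc_id' ℝ G,
      cfc_id ℝ G] at h
  · have h := cfc_congr (a := G) (f := fun x : ℝ => x⁻¹ * x * x⁻¹) (g := (·⁻¹))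
      fun x _ => by simpa using mul_inv_mul_cancel x⁻¹
    rwa [cfc_mul _ _ _ (hcont _) (hcont _), cfc_mul _ _ _ (hcont _) (hcont _), cfc_id' ℝ G] at h

/-- The orthogonal projection `W (WᵀW)⁺ Wᵀ` onto the column space of `W`. -/
theorem Matrix.exists_isSymm_isIdempotentElem_mul_eq {n m : Type*} [Fintype n] [Fintype m]
    [DecidableEq m] (W : Matrix n m ℝ) :
    ∃ P : Matrix n n ℝ, P.IsSymm ∧ IsIdempotentElem P ∧ P * W = W ∧
      P.trace ≤ Fintype.card m := by
  obtain ⟨G', hG'symm, hcomm, hGG'G, hG'GG'⟩ :=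
    (show (Wᵀ * W).IsSymm by simp [IsSymm, transpose_mul]).exists_generalizedInverse
  have hWE : W * (G' * (Wᵀ * W)) = W := by
    have hWR : Wᵀ * (W * (G' * (Wᵀ * W)) - W) = 0 := by
      rw [Matrix.mul_sub, ← Matrix.mul_assoc, ← Matrix.mul_assoc, hGG'G, sub_self]
    have h : (W * (G' * (Wᵀ * W)) - W)ᴴ * (W * (G' * (Wᵀ * W)) - W) = 0 := by
      rw [conjTranspose_eq_transpose_of_trivial, transpose_sub, transpose_mul, Matrix.sub_mul,
        Matrix.mul_assoc, hWR, Matrix.mul_zero, sub_zero]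
    exact sub_eq_zero.mp (conjTranspose_mul_self_eq_zero.mp h)
  have hEsymm : (G' * (Wᵀ * W)).IsSymm := by
    rw [IsSymm, transpose_mul, hG'symm.eq, transpose_mul, transpose_transpose, hcomm.eq]
  have hEE : IsIdempotentElem (G' * (Wᵀ * W)) := by
    rw [IsIdempotentElem, ← Matrix.mul_assoc, hG'GG']
  refine ⟨W * G' * Wᵀ, ?_, ?_, ?_, ?_⟩
  · rw [IsSymm, transpose_mul, transpose_mul, hG'symm.eq, transpose_transpose, Matrix.mul_assoc]
  · calc W * G' * Wᵀ * (W * G' * Wᵀ) = W * (G' * (Wᵀ * W) * G') * Wᵀ := by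
          simp only [Matrix.mul_assoc]
      _ = W * G' * Wᵀ := by rw [hG'GG']
  · rw [Matrix.mul_assoc, Matrix.mul_assoc, hWE]
  · rw [trace_mul_cycle, trace_mul_comm]
    exact hEsymm.trace_le_card_of_isIdempotentElem hEE

theorem Matrix.two_mul_trace_mul_sub_trace_mul_self_le {n : Type*} [Fintype n]
    {S N P : Matrix n n ℝ} (hS : S.IsSymm) (hN : N.IsSymm) (hP : P.IsSymm)
    (hPP : IsIdempotentElem P) (hPS : P * S = S) :
    2 * trace (S * N) - trace (S * S) ≤ trace (P * (N * N)) := by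
  have hSP : S * P = S := by simpa [transpose_mul, hS.eq, hP.eq] using congrArg transpose hPS
  have h0 : 0 ≤ trace ((P * N - S) * (P * N - S)ᴴ) :=
    (posSemidef_self_mul_conjTranspose _).trace_nonneg
  have e1 : trace (P * N * (N * P)) = trace (P * (N * N)) := by
    rw [← Matrix.mul_assoc, trace_mul_comm, ← Matrix.mul_assoc, ← Matrix.mul_assoc, hPP.eq,
      Matrix.mul_assoc]
  have e2 : trace (P * N * S) = trace (S * N) := by
    rw [trace_mul_cycle, hSP]
  have e3 : trace (S * (N * P)) = trace (S * N) := by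
    rw [← Matrix.mul_assoc, trace_mul_comm, ← Matrix.mul_assoc, hPS]
  rw [conjTranspose_eq_transpose_of_trivial, transpose_sub, transpose_mul, hP.eq, hN.eq, hS.eq,
    Matrix.sub_mul, Matrix.mul_sub, Matrix.mul_sub, trace_sub, trace_sub, trace_sub, e1, e2,
    e3] at h0
  linarith

theorem Matrix.exists_mul_transpose_eq_diagonal {n m : Type*} [Fintype m] [DecidableEq n]
    (f : m ↪ n) {s : n → ℝ} (hs0 : ∀ i, 0 ≤ s i) (hs : ∀ i, i ∉ Set.range f → s i = 0) :
    ∃ W : Matrix n m ℝ, W * Wᵀ = diagonal s := by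
  classical
  refine ⟨of fun i j => if i = f j then √(s i) else 0, ?_⟩
  ext i k
  by_cases hi : i ∈ Set.range f
  · obtain ⟨j, rfl⟩ := hi
    by_cases hk : f j = k
    · subst hk
      simp [mul_apply, Real.mul_self_sqrt (hs0 _)]
    · simp only [mul_apply, transpose_apply, of_apply, diagonal_apply_ne _ hk]
      exact Finset.sum_eq_zero fun j' _ => by grind
  · simp [mul_apply, diagonal_apply, hs i hi]

theorem Finset.sum_mul_le_sum_of_threshold {ι : Type*} [Fintype ι] (s : Finset ι)
    {c d : ι → ℝ} {t : ℝ} (ht : 0 ≤ t) (hc0 : ∀ i, 0 ≤ c i) (hc1 : ∀ i, c i ≤ 1)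
    (hcs : ∑ i, c i ≤ s.card) (hds : ∀ i ∈ s, t ≤ d i) (hdsc : ∀ i ∉ s, d i ≤ t) :
    ∑ i, c i * d i ≤ ∑ i ∈ s, d i := by
  classical
  have hterm (i : ι) :
      c i * d i ≤ (if i ∈ s then d i else 0) + t * (c i - if i ∈ s then 1 else 0) := by
    by_cases hi : i ∈ s
    · simp only [hi, if_true]
      nlinarith [hds i hi, hc1 i]
    · simp only [hi, if_false]
      nlinarith [hdsc i hi, hc0 i]
  calc ∑ i, c i * d i
      ≤ ∑ i, ((if i ∈ s then d i else 0) + t * (c i - if i ∈ s then 1 else 0)) :=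
        Finset.sum_le_sum fun i _ => hterm i
    _ = ∑ i ∈ s, d i + t * (∑ i, c i - s.card) := by
        rw [Finset.sum_add_distrib, ← Finset.mul_sum, Finset.sum_sub_distrib]
        simp
    _ ≤ ∑ i ∈ s, d i := by nlinarith

theorem Fin.sum_mul_le_sum_of_antitone {D K : ℕ} (hK : K ≤ D) {c d : Fin D → ℝ}
    (hc0 : ∀ i, 0 ≤ c i) (hc1 : ∀ i, c i ≤ 1) (hcs : ∑ i, c i ≤ K)
    (hd0 : ∀ i, 0 ≤ d i) (hd : Antitone d) :
    ∑ i, c i * d i ≤ ∑ i : Fin D, if (i : ℕ) < K then d i else 0 := by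
  rw [← Finset.sum_filter]
  rcases K.eq_zero_or_pos with rfl | hKpos
  · refine Finset.sum_mul_le_sum_of_threshold _ (t := ∑ i, d i)
      (Finset.sum_nonneg fun i _ => hd0 i) hc0 hc1 (by simpa using hcs) (by simp) fun i _ => ?_
    exact Finset.single_le_sum (fun j _ => hd0 j) (Finset.mem_univ i)
  · have hcard : ((Finset.univ.filter fun i : Fin D => (i : ℕ) < K).card : ℝ) = K := by
      rw [Fin.card_filter_val_lt, min_eq_right hK]
    refine Finset.sum_mul_le_sum_of_threshold _ (t := d ⟨K - 1, by omega⟩) (hd0 _) hc0 hc1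
      (hcard ▸ hcs) (fun i hi => hd ?_) fun i hi => hd ?_
    · simp only [Finset.mem_filter, Finset.mem_univ, true_and] at hi
      exact Fin.le_def.mpr (by simp; omega)
    · simp only [Finset.mem_filter, Finset.mem_univ, true_and] at hi
      exact Fin.le_def.mpr (by simp; omega)

def gepObjective {n m : Type*} [Fintype n] [Fintype m] (A B : Matrix n n ℝ) (U : Matrix n m ℝ) :
    ℝ :=
  2 * trace (Uᵀ * A * U) - trace ((Uᵀ * B * U) * (Uᵀ * B * U))

section gepObjective

variable {n m : Type*} [Fintype n] [Fintype m]

theorem gepObjective_mul (A B C : Matrix n n ℝ) (W : Matrix n m ℝ) :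
    gepObjective A B (C * W) = gepObjective (Cᵀ * A * C) (Cᵀ * B * C) W := by
  simp only [gepObjective, transpose_mul, Matrix.mul_assoc]

theorem range_gepObjective_eq_of_isUnit [DecidableEq n] (A B : Matrix n n ℝ) {C : Matrix n n ℝ}
    (hC : IsUnit C) :
    Set.range (gepObjective A B : Matrix n m ℝ → ℝ) =
      Set.range (gepObjective (Cᵀ * A * C) (Cᵀ * B * C) : Matrix n m ℝ → ℝ) := by
  ext x
  constructor
  · rintro ⟨U, rfl⟩
    refine ⟨C⁻¹ * U, ?_⟩
    rw [← gepObjective_mul, ← Matrix.mul_assoc, mul_nonsing_inv _ ((isUnit_iff_isUnit_det C).mp hC),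
      Matrix.one_mul]
  · rintro ⟨W, rfl⟩
    exact ⟨C * W, gepObjective_mul A B C W⟩

theorem gepObjective_one [DecidableEq n] (M : Matrix n n ℝ) (W : Matrix n m ℝ) :
    gepObjective M 1 W = 2 * trace (W * Wᵀ * M) - trace (W * Wᵀ * (W * Wᵀ)) := by
  have hquad : trace (Wᵀ * W * (Wᵀ * W)) = trace (W * Wᵀ * (W * Wᵀ)) := by
    rw [Matrix.mul_assoc, trace_mul_comm]
    simp only [Matrix.mul_assoc]
  rw [gepObjective, Matrix.mul_one, trace_mul_cycle Wᵀ M W, hquad]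

end gepObjective

theorem gepObjective_diagonal_one_le {D K : ℕ} (hK : K ≤ D) {lam : Fin D → ℝ}
    (hlam : Antitone lam) (hpos : ∀ k : Fin D, (k : ℕ) < K → 0 < lam k)
    (W : Matrix (Fin D) (Fin K) ℝ) :
    gepObjective (diagonal lam) 1 W ≤ ∑ k : Fin D, if (k : ℕ) < K then lam k ^ 2 else 0 := by
  obtain ⟨P, hPsymm, hPP, hPW, hPtr⟩ := exists_isSymm_isIdempotentElem_mul_eq W
  set ν : Fin D → ℝ := fun i => max (lam i) 0
  have hS : (W * Wᵀ).IsSymm := by simp [IsSymm, transpose_mul]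
  have hSdiag : ∀ i, 0 ≤ (W * Wᵀ) i i := fun i => by
    simpa using (posSemidef_self_mul_conjTranspose W).diag_nonneg (i := i)
  have hPdiag := hPsymm.diag_mem_Icc_of_isIdempotentElem hPP
  rw [gepObjective_one]
  calc 2 * trace (W * Wᵀ * diagonal lam) - trace (W * Wᵀ * (W * Wᵀ))
      ≤ 2 * trace (W * Wᵀ * diagonal ν) - trace (W * Wᵀ * (W * Wᵀ)) := by
        have : ∑ i, (W * Wᵀ) i i * lam i ≤ ∑ i, (W * Wᵀ) i i * ν i :=
          Finset.sum_le_sum fun i _ => mul_le_mul_of_nonneg_left (le_max_left _ _) (hSdiag i)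
        simp only [trace, diag, mul_diagonal]
        linarith
    _ ≤ trace (P * (diagonal ν * diagonal ν)) :=
        two_mul_trace_mul_sub_trace_mul_self_le hS (diagonal_transpose ν) hPsymm hPP
          (by rw [← Matrix.mul_assoc, hPW])
    _ = ∑ i, P i i * ν i ^ 2 := by simp [trace, diagonal_mul_diagonal, mul_diagonal, sq]
    _ ≤ ∑ i : Fin D, if (i : ℕ) < K then ν i ^ 2 else 0 :=
        Fin.sum_mul_le_sum_of_antitone hK (fun i => (hPdiag i).1) (fun i => (hPdiag i).2)
          (by simpa [trace] using hPtr) (fun i => sq_nonneg _)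
          fun a b hab => pow_le_pow_left₀ (le_max_right _ _) (max_le_max (hlam hab) le_rfl) 2
    _ = ∑ k : Fin D, if (k : ℕ) < K then lam k ^ 2 else 0 :=
        Finset.sum_congr rfl fun i _ => by
          split_ifs with hi
          · simp only [ν, max_eq_left (hpos i hi).le]
          · rfl

theorem exists_gepObjective_diagonal_one_eq {D K : ℕ} (hK : K ≤ D) {lam : Fin D → ℝ}
    (hpos : ∀ k : Fin D, (k : ℕ) < K → 0 < lam k) :
    ∃ W : Matrix (Fin D) (Fin K) ℝ,
      gepObjective (diagonal lam) 1 W = ∑ k : Fin D, if (k : ℕ) < K then lam k ^ 2 else 0 := by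
  obtain ⟨W, hW⟩ := exists_mul_transpose_eq_diagonal (Fin.castLEEmb hK)
    (s := fun i => if (i : ℕ) < K then lam i else 0)
    (fun i => by split_ifs with hi; exacts [(hpos i hi).le, le_rfl])
    (fun i hi => if_neg fun hiK => hi ⟨⟨i, hiK⟩, rfl⟩)
  refine ⟨W, ?_⟩
  rw [gepObjective_one, hW, diagonal_mul_diagonal, diagonal_mul_diagonal, trace_diagonal,
    trace_diagonal, Finset.mul_sum, ← Finset.sum_sub_distrib]
  refine Finset.sum_congr rfl fun i _ => ?_
  split_ifs <;> ring

theorem isGreatest_range_gepObjective_diagonal_one {D K : ℕ} (hK : K ≤ D) {lam : Fin D → ℝ}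
    (hlam : Antitone lam) (hpos : ∀ k : Fin D, (k : ℕ) < K → 0 < lam k) :
    IsGreatest (Set.range (gepObjective (diagonal lam) 1 : Matrix (Fin D) (Fin K) ℝ → ℝ))
      (∑ k : Fin D, if (k : ℕ) < K then lam k ^ 2 else 0) :=
  ⟨exists_gepObjective_diagonal_one_eq hK hpos, by
    rintro _ ⟨W, rfl⟩
    exact gepObjective_diagonal_one_le hK hlam hpos W⟩

theorem stmt_5_general {D K : ℕ} (hK : K ≤ D)
    (A B : Matrix (Fin D) (Fin D) ℝ)
    (Ufull : Matrix (Fin D) (Fin D) ℝ) (horth : Ufullᵀ * B * Ufull = 1)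
    (eig : Fin D → ℝ) (heig : Antitone eig)
    (hgep : A * Ufull = B * Ufull * Matrix.diagonal eig)
    (hpos : ∀ k : Fin D, (k : ℕ) < K → 0 < eig k) :
    IsGreatest
      (Set.range fun U : Matrix (Fin D) (Fin K) ℝ =>
        2 * Matrix.trace (Uᵀ * A * U) -
          Matrix.trace ((Uᵀ * B * U) * (Uᵀ * B * U)))
      (∑ k : Fin D, if (k : ℕ) < K then (eig k) ^ 2 else 0) := by
  have hUnit : IsUnit Ufull := (isUnit_iff_isUnit_det Ufull).mpr
    (isUnit_det_of_left_inverse (by rwa [Matrix.mul_assoc] at horth))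
  have hdiag : Ufullᵀ * A * Ufull = diagonal eig := by
    rw [Matrix.mul_assoc, hgep, ← Matrix.mul_assoc, ← Matrix.mul_assoc, horth, Matrix.one_mul]
  change IsGreatest (Set.range (gepObjective A B)) _
  rw [range_gepObjective_eq_of_isUnit A B hUnit, hdiag, horth]
  exact isGreatest_range_gepObjective_diagonal_one hK heig hpos

theorem stmt_5 {D K : ℕ} (hK : K ≤ D)
    (A B : Matrix (Fin D) (Fin D) ℝ) (hA : A.IsSymm) (hB : B.PosDef)
    (Ufull : Matrix (Fin D) (Fin D) ℝ) (horth : Ufullᵀ * B * Ufull = 1)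
    (eig : Fin D → ℝ) (heig : Antitone eig)
    (hgep : A * Ufull = B * Ufull * Matrix.diagonal eig)
    (hpos : ∀ k : Fin D, (k : ℕ) < K → 0 < eig k) :
    IsGreatest
      (Set.range fun U : Matrix (Fin D) (Fin K) ℝ =>
        2 * Matrix.trace (Uᵀ * A * U) -
          Matrix.trace ((Uᵀ * B * U) * (Uᵀ * B * U)))
      (∑ k : Fin D, if (k : ℕ) < K then (eig k) ^ 2 else 0) :=
  stmt_5_general hK A B Ufull horth eig heig hgep hpos
end

section
/- Let (X⁽¹⁾, X⁽²⁾) be an exchangeable pair of square-integrable random vectors in ℝ^D, each with positive definite covariance matrix. Suppose (u⁽¹⁾, u⁽²⁾) satisfy the CCA generalized eigenvector equations Σ¹²u⁽²⁾ = ρΣ¹¹u⁽¹⁾ and Σ²¹u⁽¹⁾ = ρΣ²²u⁽²⁾ with ρ > 0 and u⁽¹⁾ ≠ u⁽²⁾. Then the cross-covariance matrix Σ¹² = Cov(X⁽¹⁾, X⁽²⁾) has a strictly negative eigenvalue, i.e., there exists Δ ≠ 0 with ΔᵀΣ¹²Δ < 0. -/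
open Matrix MeasureTheory

/-- Covariance matrix of a pair of random vectors. -/
noncomputable def covMat {Ω : Type*} [MeasurableSpace Ω] (ℙ : Measure Ω) {D : ℕ}
    (X Y : Ω → Fin D → ℝ) : Matrix (Fin D) (Fin D) ℝ :=
  Matrix.of fun a b =>
    (∫ ω, X ω a * Y ω b ∂ℙ) - (∫ ω, X ω a ∂ℙ) * (∫ ω, Y ω b ∂ℙ)

/-!
Exchangeability gives `Σ¹¹ = Σ²²` and `Σ¹² = Σ²¹`. Subtracting the two eigenvector equations
then shows that `Δ = u⁽¹⁾ - u⁽²⁾ ≠ 0` satisfies `Σ¹² Δ = -ρ Σ¹¹ Δ`, so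
`Δᵀ Σ¹² Δ = -ρ Δᵀ Σ¹¹ Δ < 0` by positive definiteness of `Σ¹¹`.
-/

section Exchangeable

variable {Ω : Type*} [MeasurableSpace Ω] {ℙ : Measure Ω}

theorem integral_comp_prodMk_eq_swap {α : Type*} [MeasurableSpace α] {X1 X2 : Ω → α}
    (hmeas1 : Measurable X1) (hmeas2 : Measurable X2)
    (hexch : ℙ.map (fun ω => (X1 ω, X2 ω)) = ℙ.map (fun ω => (X2 ω, X1 ω)))
    (f : α × α → ℝ) (hf : Measurable f) :
    ∫ ω, f (X1 ω, X2 ω) ∂ℙ = ∫ ω, f (X2 ω, X1 ω) ∂ℙ := by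
  rw [← integral_map (hmeas1.prodMk hmeas2).aemeasurable hf.aestronglyMeasurable,
    hexch, integral_map (hmeas2.prodMk hmeas1).aemeasurable hf.aestronglyMeasurable]

theorem covMat_self_eq_of_exchangeable {D : ℕ} {X1 X2 : Ω → Fin D → ℝ}
    (hmeas1 : Measurable X1) (hmeas2 : Measurable X2)
    (hexch : ℙ.map (fun ω => (X1 ω, X2 ω)) = ℙ.map (fun ω => (X2 ω, X1 ω))) :
    covMat ℙ X1 X1 = covMat ℙ X2 X2 := by
  ext a b
  have swap := integral_comp_prodMk_eq_swap hmeas1 hmeas2 hexch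
  simp only [covMat, Matrix.of_apply]
  rw [swap (fun p => p.1 a * p.1 b) (by fun_prop), swap (fun p => p.1 a) (by fun_prop),
    swap (fun p => p.1 b) (by fun_prop)]

theorem covMat_comm_of_exchangeable {D : ℕ} {X1 X2 : Ω → Fin D → ℝ}
    (hmeas1 : Measurable X1) (hmeas2 : Measurable X2)
    (hexch : ℙ.map (fun ω => (X1 ω, X2 ω)) = ℙ.map (fun ω => (X2 ω, X1 ω))) :
    covMat ℙ X1 X2 = covMat ℙ X2 X1 := by
  ext a b
  have swap := integral_comp_prodMk_eq_swap hmeas1 hmeas2 hexch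
  simp only [covMat, Matrix.of_apply]
  rw [swap (fun p => p.1 a * p.2 b) (by fun_prop), swap (fun p => p.1 a) (by fun_prop),
    swap (fun p => p.2 b) (by fun_prop)]

end Exchangeable

section CCA

variable {n : Type*} [Fintype n] {A B : Matrix n n ℝ} {u1 u2 : n → ℝ} {ρ : ℝ}

theorem mulVec_sub_eq_neg_smul_of_cca (hc1 : B *ᵥ u2 = ρ • A *ᵥ u1)
    (hc2 : B *ᵥ u1 = ρ • A *ᵥ u2) : B *ᵥ (u1 - u2) = -(ρ • A *ᵥ (u1 - u2)) := by
  rw [mulVec_sub, hc1, hc2, mulVec_sub, smul_sub]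
  abel

theorem exists_dotProduct_mulVec_neg_of_cca (hA : A.PosDef) (hρ : 0 < ρ) (hneq : u1 ≠ u2)
    (hc1 : B *ᵥ u2 = ρ • A *ᵥ u1) (hc2 : B *ᵥ u1 = ρ • A *ᵥ u2) :
    ∃ Δ : n → ℝ, Δ ≠ 0 ∧ Δ ⬝ᵥ B *ᵥ Δ < 0 := by
  have hΔ : u1 - u2 ≠ 0 := sub_ne_zero.mpr hneq
  have hpos : 0 < (u1 - u2) ⬝ᵥ A *ᵥ (u1 - u2) := by simpa using hA.dotProduct_mulVec_pos hΔ
  refine ⟨u1 - u2, hΔ, ?_⟩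
  rw [mulVec_sub_eq_neg_smul_of_cca hc1 hc2, dotProduct_neg, dotProduct_smul, smul_eq_mul,
    neg_lt_zero]
  positivity

end CCA

theorem stmt_10_general {Ω : Type*} [MeasurableSpace Ω] (ℙ : Measure Ω)
    {D : ℕ} (X1 X2 : Ω → Fin D → ℝ)
    (hmeas1 : Measurable X1) (hmeas2 : Measurable X2)
    (hexch : Measure.map (fun ω => (X1 ω, X2 ω)) ℙ =
      Measure.map (fun ω => (X2 ω, X1 ω)) ℙ)
    (hpd1 : (covMat ℙ X1 X1).PosDef)
    (u1 u2 : Fin D → ℝ) (ρ : ℝ) (hρ : 0 < ρ) (hneq : u1 ≠ u2)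
    (hc1 : (covMat ℙ X1 X2).mulVec u2 = ρ • (covMat ℙ X1 X1).mulVec u1)
    (hc2 : (covMat ℙ X2 X1).mulVec u1 = ρ • (covMat ℙ X2 X2).mulVec u2) :
    ∃ Δ : Fin D → ℝ, Δ ≠ 0 ∧ Δ ⬝ᵥ (covMat ℙ X1 X2).mulVec Δ < 0 := by
  rw [← covMat_comm_of_exchangeable hmeas1 hmeas2 hexch,
    ← covMat_self_eq_of_exchangeable hmeas1 hmeas2 hexch] at hc2
  exact exists_dotProduct_mulVec_neg_of_cca hpd1 hρ hneq hc1 hc2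

theorem stmt_10 {Ω : Type*} [MeasurableSpace Ω] (ℙ : Measure Ω) [IsProbabilityMeasure ℙ]
    {D : ℕ} (X1 X2 : Ω → Fin D → ℝ)
    (hmeas1 : Measurable X1) (hmeas2 : Measurable X2)
    (hL2_1 : ∀ a, MemLp (fun ω => X1 ω a) 2 ℙ)
    (hL2_2 : ∀ a, MemLp (fun ω => X2 ω a) 2 ℙ)
    (hexch : Measure.map (fun ω => (X1 ω, X2 ω)) ℙ =
      Measure.map (fun ω => (X2 ω, X1 ω)) ℙ)
    (hpd1 : (covMat ℙ X1 X1).PosDef) (hpd2 : (covMat ℙ X2 X2).PosDef)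
    (u1 u2 : Fin D → ℝ) (ρ : ℝ) (hρ : 0 < ρ) (hneq : u1 ≠ u2)
    (hc1 : (covMat ℙ X1 X2).mulVec u2 = ρ • (covMat ℙ X1 X1).mulVec u1)
    (hc2 : (covMat ℙ X2 X1).mulVec u1 = ρ • (covMat ℙ X2 X2).mulVec u2) :
    ∃ Δ : Fin D → ℝ, Δ ≠ 0 ∧ Δ ⬝ᵥ (covMat ℙ X1 X2).mulVec Δ < 0 :=
  stmt_10_general ℙ X1 X2 hmeas1 hmeas2 hexch hpd1 u1 u2 ρ hρ hneq hc1 hc2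
end

section
/- Let Λ ∈ ℝ^{R×R} be diagonal with nonnegative entries λ_r, f : ℝ^{R×K} → ℝ arbitrary, L(T¹, T²) = −2 trace((T¹)ᵀΛT²) + f(T¹) + f(T²). If (T̂¹, T̂²) minimizes L, then for every row index r with λ_r > 0, the r-th rows of T̂¹ and T̂² are equal. -/
open Matrix

lemma tr_aux {R K : ℕ} (lam : Fin R → ℝ) (A B : Matrix (Fin R) (Fin K) ℝ) :
    Matrix.trace (Aᵀ * Matrix.diagonal lam * B) =
      ∑ r : Fin R, ∑ k : Fin K, lam r * A r k * B r k := by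
  rw [Matrix.mul_assoc, Matrix.trace]
  simp only [Matrix.diag, Matrix.mul_apply, Matrix.diagonal_mul, Matrix.transpose_apply]
  rw [Finset.sum_comm]
  refine Finset.sum_congr rfl fun r _ => Finset.sum_congr rfl fun k _ => ?_
  simp [Matrix.diagonal_apply]
  ring

theorem stmt_13 {R K : ℕ} (lam : Fin R → ℝ) (hlam : ∀ r, 0 ≤ lam r)
    (f : Matrix (Fin R) (Fin K) ℝ → ℝ)
    (L : Matrix (Fin R) (Fin K) ℝ → Matrix (Fin R) (Fin K) ℝ → ℝ)
    (hL : ∀ T1 T2, L T1 T2 =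
      -2 * Matrix.trace (T1ᵀ * Matrix.diagonal lam * T2) + f T1 + f T2)
    (T1 T2 : Matrix (Fin R) (Fin K) ℝ)
    (hmin : ∀ S1 S2, L T1 T2 ≤ L S1 S2) :
    ∀ r : Fin R, 0 < lam r → ∀ k : Fin K, T1 r k = T2 r k := by
  have h1 := hmin T1 T1
  have h2 := hmin T2 T2
  rw [hL, hL] at h1
  rw [hL, hL] at h2
  rw [tr_aux, tr_aux] at h1
  rw [tr_aux, tr_aux] at h2
  have key : ∑ r : Fin R, ∑ k : Fin K, lam r * (T1 r k - T2 r k) ^ 2 ≤ 0 := by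
    have e : (∑ r : Fin R, ∑ k : Fin K, lam r * T1 r k * T1 r k)
        + (∑ r : Fin R, ∑ k : Fin K, lam r * T2 r k * T2 r k)
        - 2 * (∑ r : Fin R, ∑ k : Fin K, lam r * T1 r k * T2 r k)
        = ∑ r : Fin R, ∑ k : Fin K, lam r * (T1 r k - T2 r k) ^ 2 := by
      rw [Finset.mul_sum, ← Finset.sum_add_distrib, ← Finset.sum_sub_distrib]
      refine Finset.sum_congr rfl fun r _ => ?_
      rw [Finset.mul_sum, ← Finset.sum_add_distrib, ← Finset.sum_sub_distrib]
      exact Finset.sum_congr rfl fun k _ => by ring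
    linarith
  have hterm : ∀ r : Fin R, ∀ k : Fin K, lam r * (T1 r k - T2 r k) ^ 2 = 0 := by
    have hz : ∑ r : Fin R, ∑ k : Fin K, lam r * (T1 r k - T2 r k) ^ 2 = 0 := by
      have hpos : 0 ≤ ∑ r : Fin R, ∑ k : Fin K, lam r * (T1 r k - T2 r k) ^ 2 :=
        Finset.sum_nonneg fun r _ => Finset.sum_nonneg fun k _ =>
          mul_nonneg (hlam r) (sq_nonneg _)
      linarith
    intro r k
    have := (Finset.sum_eq_zero_iff_of_nonneg (fun r _ => Finset.sum_nonneg
      fun k _ => mul_nonneg (hlam r) (sq_nonneg _))).mp hz r (Finset.mem_univ r)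
    exact (Finset.sum_eq_zero_iff_of_nonneg (fun k _ =>
      mul_nonneg (hlam r) (sq_nonneg _))).mp this k (Finset.mem_univ k)
  intro r hr k
  have := hterm r k
  have h2 : (T1 r k - T2 r k) ^ 2 = 0 := by
    rcases mul_eq_zero.mp this with h | h
    · exact absurd h (ne_of_gt hr)
    · exact h
  have := pow_eq_zero_iff (n := 2) (by norm_num) |>.mp h2
  linarith
end

section
/- Let 1 ≥ λ₁ > λ₂ ≥ 0 and γ = λ₂/λ₁ (with λ₁ > 0). For any θ₁, θ₂ ∈ ℝ, λ₁² − (λ₁ cos θ₁ cos θ₂ + λ₂ sin θ₁ sin θ₂)² ≤ (1/2) λ₁² (sin² θ₁ + sin² θ₂)(3 + 2γ − γ²). -/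
/-! Divide by `λ₁²` and write `cᵢ = cos θᵢ`, `sᵢ = sin θᵢ`, `a = s₁²`, `b = s₂²`. Since
`1 - c₁²c₂² = a + b - ab` and `s₁²s₂² = ab`, the left side becomes
`a + b - (1 + γ²) ab - 2γ c₁c₂ s₁s₂ ≤ (1 + γ)(a + b)`, because `|c₁c₂| ≤ 1` and `2|s₁s₂| ≤ a + b`.
For `0 ≤ γ ≤ 1` this is at most `(a + b)(3 + 2γ - γ²)/2`. -/

lemma neg_two_mul_mul_le_sq_add_sq {c₁ s₁ c₂ s₂ : ℝ}
    (h₁ : c₁ ^ 2 + s₁ ^ 2 = 1) (h₂ : c₂ ^ 2 + s₂ ^ 2 = 1) :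
    -(2 * (c₁ * c₂) * (s₁ * s₂)) ≤ s₁ ^ 2 + s₂ ^ 2 := by
  have hc : |c₁ * c₂| ≤ 1 := by
    rw [abs_mul]
    exact mul_le_one₀ ((sq_le_one_iff_abs_le_one _).1 (by linarith [sq_nonneg s₁])) (abs_nonneg _)
      ((sq_le_one_iff_abs_le_one _).1 (by linarith [sq_nonneg s₂]))
  have hs : 2 * |s₁ * s₂| ≤ s₁ ^ 2 + s₂ ^ 2 := by
    rw [abs_mul, ← sq_abs s₁, ← sq_abs s₂, ← mul_assoc]
    exact two_mul_le_add_sq _ _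
  calc -(2 * (c₁ * c₂) * (s₁ * s₂)) ≤ |2 * (c₁ * c₂) * (s₁ * s₂)| := neg_le_abs _
    _ = |c₁ * c₂| * (2 * |s₁ * s₂|) := by rw [abs_mul, abs_mul, abs_two]; ring
    _ ≤ 1 * (s₁ ^ 2 + s₂ ^ 2) := mul_le_mul hc hs (by positivity) zero_le_one
    _ = s₁ ^ 2 + s₂ ^ 2 := one_mul _

lemma one_sub_sq_mul_add_mul_le {γ c₁ s₁ c₂ s₂ : ℝ} (hγ₀ : 0 ≤ γ) (hγ₁ : γ ≤ 1)
    (h₁ : c₁ ^ 2 + s₁ ^ 2 = 1) (h₂ : c₂ ^ 2 + s₂ ^ 2 = 1) :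
    1 - (c₁ * c₂ + γ * s₁ * s₂) ^ 2 ≤ (1 / 2) * (s₁ ^ 2 + s₂ ^ 2) * (3 + 2 * γ - γ ^ 2) := by
  have hcross := mul_le_mul_of_nonneg_left (neg_two_mul_mul_le_sq_add_sq h₁ h₂) hγ₀
  have hexpand : 1 - (c₁ * c₂ + γ * s₁ * s₂) ^ 2 = s₁ ^ 2 + s₂ ^ 2 - (1 + γ ^ 2) * (s₁ * s₂) ^ 2
      + γ * -(2 * (c₁ * c₂) * (s₁ * s₂)) := by
    linear_combination (-(c₂ ^ 2)) * h₁ + (s₁ ^ 2 - 1) * h₂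
  nlinarith [sq_nonneg (s₁ * s₂), mul_nonneg (mul_nonneg (sub_nonneg.2 hγ₁) (by linarith : 0 ≤ 1 + γ))
    (add_nonneg (sq_nonneg s₁) (sq_nonneg s₂))]

theorem stmt_15_general (l1 l2 : ℝ) (h12 : l2 < l1) (h2 : 0 ≤ l2) (h1pos : 0 < l1)
    (γ : ℝ) (hγ : γ = l2 / l1) (θ₁ θ₂ : ℝ) :
    l1 ^ 2 - (l1 * Real.cos θ₁ * Real.cos θ₂ + l2 * Real.sin θ₁ * Real.sin θ₂) ^ 2 ≤
      (1 / 2) * l1 ^ 2 * (Real.sin θ₁ ^ 2 + Real.sin θ₂ ^ 2) * (3 + 2 * γ - γ ^ 2) := by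
  have hl2 : l2 = γ * l1 := by rw [hγ, div_mul_cancel₀ _ h1pos.ne']
  have hγ₀ : 0 ≤ γ := hγ ▸ div_nonneg h2 h1pos.le
  have hγ₁ : γ ≤ 1 := hγ ▸ div_le_one_of_le₀ h12.le h1pos.le
  have key := one_sub_sq_mul_add_mul_le hγ₀ hγ₁ (Real.cos_sq_add_sin_sq θ₁) (Real.cos_sq_add_sin_sq θ₂)
  calc l1 ^ 2 - (l1 * Real.cos θ₁ * Real.cos θ₂ + l2 * Real.sin θ₁ * Real.sin θ₂) ^ 2
      = l1 ^ 2 * (1 - (Real.cos θ₁ * Real.cos θ₂ + γ * Real.sin θ₁ * Real.sin θ₂) ^ 2) := by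
        rw [hl2]; ring
    _ ≤ l1 ^ 2 * ((1 / 2) * (Real.sin θ₁ ^ 2 + Real.sin θ₂ ^ 2) * (3 + 2 * γ - γ ^ 2)) :=
        mul_le_mul_of_nonneg_left key (sq_nonneg l1)
    _ = (1 / 2) * l1 ^ 2 * (Real.sin θ₁ ^ 2 + Real.sin θ₂ ^ 2) * (3 + 2 * γ - γ ^ 2) := by ring

theorem stmt_15 (l1 l2 : ℝ) (h1 : l1 ≤ 1) (h12 : l2 < l1) (h2 : 0 ≤ l2) (h1pos : 0 < l1)
    (γ : ℝ) (hγ : γ = l2 / l1) (θ₁ θ₂ : ℝ) :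
    l1 ^ 2 - (l1 * Real.cos θ₁ * Real.cos θ₂ + l2 * Real.sin θ₁ * Real.sin θ₂) ^ 2 ≤
      (1 / 2) * l1 ^ 2 * (Real.sin θ₁ ^ 2 + Real.sin θ₂ ^ 2) * (3 + 2 * γ - γ ^ 2) :=
  stmt_15_general l1 l2 h12 h2 h1pos γ hγ θ₁ θ₂
end

section
/- Let 1 ≥ λ₁ > λ₂ ≥ 0 and let β satisfy 0 < β < 2(λ₁ − λ₂)(1 − λ₁) / ((3λ₁ − λ₂)(λ₁ + λ₂)) (assume λ₁ > 0 so the denominator is positive). Define, for unit angle parameters θ₁, θ₂, the Barlow-twins loss L(θ₁, θ₂) = ∑_{k=1}^{2} (1 − λ̄(θ_k))² + 2β(λ₁ cos θ₁ cos θ₂ + λ₂ sin θ₁ sin θ₂)², where λ̄(θ) = λ₁ cos²θ + λ₂ sin²θ. Then L(θ₁, θ₂) ≥ L(0, 0), with equality only if sin θ₁ = sin θ₂ = 0. -/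
theorem stmt_16 (l1 l2 β : ℝ) (h1 : l1 ≤ 1) (h12 : l2 < l1) (h2 : 0 ≤ l2) (h1pos : 0 < l1)
    (hβpos : 0 < β)
    (hβ : β < 2 * (l1 - l2) * (1 - l1) / ((3 * l1 - l2) * (l1 + l2)))
    (lbar : ℝ → ℝ) (hlbar : ∀ θ, lbar θ = l1 * Real.cos θ ^ 2 + l2 * Real.sin θ ^ 2)
    (L : ℝ → ℝ → ℝ)
    (hLdef : ∀ θ₁ θ₂, L θ₁ θ₂ =
      (1 - lbar θ₁) ^ 2 + (1 - lbar θ₂) ^ 2 +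
        2 * β * (l1 * Real.cos θ₁ * Real.cos θ₂ + l2 * Real.sin θ₁ * Real.sin θ₂) ^ 2) :
    ∀ θ₁ θ₂ : ℝ, L 0 0 ≤ L θ₁ θ₂ ∧
      (L θ₁ θ₂ = L 0 0 → Real.sin θ₁ = 0 ∧ Real.sin θ₂ = 0) := by
  have hden : 0 < (3 * l1 - l2) * (l1 + l2) := by nlinarith
  have hb : β * ((3 * l1 - l2) * (l1 + l2)) < 2 * (l1 - l2) * (1 - l1) :=
    (lt_div_iff₀ hden).mp hβ
  have hkey : β * l1 * (l1 + l2) < (l1 - l2) * (1 - l1) := by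
    nlinarith [mul_pos hβpos (mul_pos (by linarith : (0:ℝ) < l1 - l2) (by linarith : (0:ℝ) < l1 + l2))]
  intro θ₁ θ₂
  have main : L 0 0 + (l1 - l2) ^ 2 * (Real.sin θ₁ ^ 4 + Real.sin θ₂ ^ 4) ≤ L θ₁ θ₂ := by
    rw [hLdef, hLdef]; simp only [hlbar]
    simp only [Real.cos_zero, Real.sin_zero]
    set c1 := Real.cos θ₁ with hc1def; set s1 := Real.sin θ₁ with hs1def
    set c2 := Real.cos θ₂ with hc2def; set s2 := Real.sin θ₂ with hs2def
    have hc1 : c1 ^ 2 = 1 - s1 ^ 2 := by rw [hc1def, hs1def]; exact Real.cos_sq' θ₁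
    have hc2 : c2 ^ 2 = 1 - s2 ^ 2 := by rw [hc2def, hs2def]; exact Real.cos_sq' θ₂
    have hcc : c1 ^ 2 * c2 ^ 2 = (1 - s1 ^ 2) * (1 - s2 ^ 2) := by rw [hc1, hc2]
    have hsc1 : s1 ^ 2 * c2 ^ 2 = s1 ^ 2 * (1 - s2 ^ 2) := by rw [hc2]
    have hsc2 : s2 ^ 2 * c1 ^ 2 = s2 ^ 2 * (1 - s1 ^ 2) := by rw [hc1]
    have hX : l1 ^ 2 - l1 * (l1 + l2) * (s1 ^ 2 + s2 ^ 2) ≤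
        (l1 * c1 * c2 + l2 * s1 * s2) ^ 2 := by
      nlinarith [mul_nonneg (mul_nonneg h1pos.le h2) (sq_nonneg (s1 * c2 + s2 * c1)),
        mul_nonneg (sq_nonneg (l1 + l2)) (mul_nonneg (sq_nonneg s1) (sq_nonneg s2)),
        hcc, hsc1, hsc2]
    have hA : 2 * β * (l1 ^ 2 - l1 * (l1 + l2) * (s1 ^ 2 + s2 ^ 2)) ≤
        2 * β * (l1 * c1 * c2 + l2 * s1 * s2) ^ 2 :=
      mul_le_mul_of_nonneg_left hX (by positivity)
    have e1 : 1 - (l1 * c1 ^ 2 + l2 * s1 ^ 2) = (1 - l1) + (l1 - l2) * s1 ^ 2 := by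
      rw [hc1]; ring
    have e2 : 1 - (l1 * c2 ^ 2 + l2 * s2 ^ 2) = (1 - l1) + (l1 - l2) * s2 ^ 2 := by
      rw [hc2]; ring
    rw [e1, e2]
    nlinarith [hA, mul_nonneg (sub_nonneg.mpr hkey.le)
      (by positivity : (0:ℝ) ≤ s1 ^ 2 + s2 ^ 2)]
  have p1 : (0:ℝ) ≤ Real.sin θ₁ ^ 4 := by positivity
  have p2 : (0:ℝ) ≤ Real.sin θ₂ ^ 4 := by positivity
  have pl : (0:ℝ) < (l1 - l2) ^ 2 := pow_pos (by linarith) 2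
  constructor
  · have := mul_nonneg pl.le (add_nonneg p1 p2)
    linarith only [main, this]
  · intro hEq
    have h4 : (l1 - l2) ^ 2 * (Real.sin θ₁ ^ 4 + Real.sin θ₂ ^ 4) ≤ 0 := by
      linarith only [main, hEq]
    have hsum : Real.sin θ₁ ^ 4 + Real.sin θ₂ ^ 4 ≤ 0 :=
      le_of_not_gt fun h => absurd h4 (not_le.mpr (mul_pos pl h))
    have e1 : Real.sin θ₁ ^ 4 = 0 := le_antisymm (by linarith only [hsum, p2]) p1
    have e2 : Real.sin θ₂ ^ 4 = 0 := le_antisymm (by linarith only [hsum, p1]) p2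
    have g1 : (Real.sin θ₁ ^ 2) ^ 2 = 0 := by rw [← e1]; ring
    have g2 : (Real.sin θ₂ ^ 2) ^ 2 = 0 := by rw [← e2]; ring
    exact ⟨sq_eq_zero_iff.mp (sq_eq_zero_iff.mp g1),
      sq_eq_zero_iff.mp (sq_eq_zero_iff.mp g2)⟩
end
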